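/- On the open set {(x,y) ∈ ℝ² : x > 0, y > 0, x²y² ≠ 1}, consider the 2-dimensional metric g with nonzero components g_{xx} = x(x²y² − 1)/y² and g_{yy} = (x²y² − 1)/y, and the potential V(x,y) = 1/(y(x²y² − 1)). Then the vector fields ξ₁ = x^{−1/2} ∂_x and ξ₂ = x ∂_x + y ∂_y are Killing vectors of the scaled metric ḡ = V g (whose nonzero components are ḡ_{xx} = x/y³ and ḡ_{yy} = 1/y²), i.e. L_{ξ₁} ḡ = 0 and L_{ξ₂} ḡ = 0; equivalently, each ξ_i satisfies L_{ξ_i} g = ω_i g together with ξ_i^σ ∂_σ V + ω_i V = 0 for a suitable smooth function ω_i, so each generates a variational (Noether) symmetry of the constrained Lagrangian with kinetic metric g and potential V. -/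

import Mathlib

open scoped BigOperators

noncomputable section

namespace TwoDimExample

/-- Partial derivative `∂_σ f` at `p ∈ ℝ²`. -/
def pderiv' (f : (Fin 2 → ℝ) → ℝ) (σ : Fin 2) (p : Fin 2 → ℝ) : ℝ :=
  fderiv ℝ f p (Pi.single σ 1)

/-- Lie derivative `(L_ξ g)_{αμ}` of a metric along a vector field. -/
def lieD (ξ : (Fin 2 → ℝ) → Fin 2 → ℝ) (g : (Fin 2 → ℝ) → Fin 2 → Fin 2 → ℝ)
    (p : Fin 2 → ℝ) (α μ : Fin 2) : ℝ :=
  (∑ σ, ξ p σ * pderiv' (fun y => g y α μ) σ p)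
  + (∑ σ, g p σ μ * pderiv' (fun y => ξ y σ) α p)
  + (∑ σ, g p α σ * pderiv' (fun y => ξ y σ) μ p)

/-- The metric `g` with `g_xx = x(x²y² − 1)/y²`, `g_yy = (x²y² − 1)/y`;
coordinates `x = p 0`, `y = p 1`. -/
def g (p : Fin 2 → ℝ) : Fin 2 → Fin 2 → ℝ :=
  ![![p 0 * ((p 0)^2 * (p 1)^2 - 1) / (p 1)^2, 0],
    ![0, ((p 0)^2 * (p 1)^2 - 1) / (p 1)]]

/-- The potential `V = 1/(y(x²y² − 1))`. -/
def V (p : Fin 2 → ℝ) : ℝ := 1 / (p 1 * ((p 0)^2 * (p 1)^2 - 1))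

/-- The scaled metric `ḡ = V g`. -/
def gbar (p : Fin 2 → ℝ) : Fin 2 → Fin 2 → ℝ := fun α μ => V p * g p α μ

/-- The vector field `ξ₁ = x^{−1/2} ∂_x`. -/
def ξ₁ (p : Fin 2 → ℝ) : Fin 2 → ℝ := ![(Real.sqrt (p 0))⁻¹, 0]

/-- The vector field `ξ₂ = x ∂_x + y ∂_y`. -/
def ξ₂ (p : Fin 2 → ℝ) : Fin 2 → ℝ := ![p 0, p 1]

/-- The open set `U = {(x,y) : x > 0, y > 0, x²y² ≠ 1}`. -/
def U : Set (Fin 2 → ℝ) := {p | 0 < p 0 ∧ 0 < p 1 ∧ (p 0)^2 * (p 1)^2 ≠ 1}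


set_option maxHeartbeats 1000000

lemma pd_eq {f : (Fin 2 → ℝ) → ℝ} {f' : (Fin 2 → ℝ) →L[ℝ] ℝ} {p : Fin 2 → ℝ}
    (h : HasFDerivAt f f' p) (σ : Fin 2) :
    pderiv' f σ p = f' (Pi.single σ 1) := by rw [pderiv', h.fderiv]

lemma hasF_proj {p : Fin 2 → ℝ} (i : Fin 2) :
    HasFDerivAt (fun q : Fin 2 → ℝ => q i)
      (ContinuousLinearMap.proj i : (Fin 2 → ℝ) →L[ℝ] ℝ) p :=
  (ContinuousLinearMap.proj i : (Fin 2 → ℝ) →L[ℝ] ℝ).hasFDerivAt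

lemma pd_zero {p : Fin 2 → ℝ} (σ : Fin 2) : pderiv' (fun _ => (0:ℝ)) σ p = 0 := by
  rw [pd_eq (hasFDerivAt_const 0 p)]; simp

section
variable {p : Fin 2 → ℝ}

lemma pd_g00 (hy : p 1 ≠ 0) :
    pderiv' (fun q => g q 0 0) 0 p = (3*(p 0)^2*(p 1)^2 - 1)/(p 1)^2 ∧
    pderiv' (fun q => g q 0 0) 1 p = 2*(p 0)/(p 1)^3 := by
  have e : (fun q => g q 0 0)
      = (fun q : Fin 2 → ℝ => q 0 * (q 0 * q 0 * (q 1 * q 1) - 1) * (q 1 * q 1)⁻¹) := by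
    funext q
    simp only [g, Matrix.cons_val', Matrix.cons_val_zero, Matrix.empty_val',
      Matrix.cons_val_fin_one, Matrix.cons_val_one, Matrix.head_cons, Matrix.head_fin_const]
    ring
  have h : HasFDerivAt
      (fun q : Fin 2 → ℝ => q 0 * (q 0 * q 0 * (q 1 * q 1) - 1) * (q 1 * q 1)⁻¹) _ p :=
    ((hasF_proj 0).mul ((((hasF_proj 0).mul (hasF_proj 0)).mul
      ((hasF_proj 1).mul (hasF_proj 1))).sub_const 1)).mul
      ((hasDerivAt_inv (mul_ne_zero hy hy)).comp_hasFDerivAt p ((hasF_proj 1).mul (hasF_proj 1)))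
  rw [e]
  constructor <;> rw [pd_eq h] <;> simp [Pi.single_apply] <;> field_simp <;> ring

lemma pd_g11 (hy : p 1 ≠ 0) :
    pderiv' (fun q => g q 1 1) 0 p = 2*(p 0)*(p 1) ∧
    pderiv' (fun q => g q 1 1) 1 p = (p 0)^2 + 1/(p 1)^2 := by
  have e : (fun q => g q 1 1)
      = (fun q : Fin 2 → ℝ => (q 0 * q 0 * (q 1 * q 1) - 1) * (q 1)⁻¹) := by
    funext q
    simp only [g, Matrix.cons_val', Matrix.cons_val_zero, Matrix.empty_val',
      Matrix.cons_val_fin_one, Matrix.cons_val_one, Matrix.head_cons, Matrix.head_fin_const]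
    ring
  have h : HasFDerivAt
      (fun q : Fin 2 → ℝ => (q 0 * q 0 * (q 1 * q 1) - 1) * (q 1)⁻¹) _ p :=
    ((((hasF_proj 0).mul (hasF_proj 0)).mul
      ((hasF_proj 1).mul (hasF_proj 1))).sub_const 1).mul
      ((hasDerivAt_inv hy).comp_hasFDerivAt p (hasF_proj 1))
  rw [e]
  constructor <;> rw [pd_eq h] <;> simp [Pi.single_apply] <;> field_simp <;> ring

lemma pd_g01 (σ : Fin 2) : pderiv' (fun q => g q 0 1) σ p = 0 := by
  have e : (fun q => g q 0 1) = (fun _ : Fin 2 → ℝ => (0:ℝ)) := by funext q; simp [g]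
  rw [e]; exact pd_zero σ

lemma pd_g10 (σ : Fin 2) : pderiv' (fun q => g q 1 0) σ p = 0 := by
  have e : (fun q => g q 1 0) = (fun _ : Fin 2 → ℝ => (0:ℝ)) := by funext q; simp [g]
  rw [e]; exact pd_zero σ

lemma pd_V (hy : p 1 ≠ 0) (hD : (p 0)^2*(p 1)^2 - 1 ≠ 0) :
    pderiv' V 0 p = -(2*(p 0)*(p 1)^3)/((p 1)*((p 0)^2*(p 1)^2 - 1))^2 ∧
    pderiv' V 1 p = -(3*(p 0)^2*(p 1)^2 - 1)/((p 1)*((p 0)^2*(p 1)^2 - 1))^2 := by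
  have hD' : p 0 * p 0 * (p 1 * p 1) - 1 ≠ 0 := by
    rw [show p 0 * p 0 * (p 1 * p 1) - 1 = (p 0)^2*(p 1)^2 - 1 by ring]; exact hD
  have hne : p 1 * (p 0 * p 0 * (p 1 * p 1) - 1) ≠ 0 := mul_ne_zero hy hD'
  have e : V = (fun q : Fin 2 → ℝ => (q 1 * (q 0 * q 0 * (q 1 * q 1) - 1))⁻¹) := by
    funext q; simp only [V]; rw [one_div]; ring_nf
  have h : HasFDerivAt
      (fun q : Fin 2 → ℝ => (q 1 * (q 0 * q 0 * (q 1 * q 1) - 1))⁻¹) _ p :=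
    (hasDerivAt_inv hne).comp_hasFDerivAt p ((hasF_proj 1).mul
      ((((hasF_proj 0).mul (hasF_proj 0)).mul ((hasF_proj 1).mul (hasF_proj 1))).sub_const 1))
  rw [e]
  constructor <;> rw [pd_eq h] <;> simp [Pi.single_apply] <;> field_simp <;> ring

lemma pd_gbar00 (hy : p 1 ≠ 0) (hD : (p 0)^2*(p 1)^2 - 1 ≠ 0) :
    pderiv' (fun q => gbar q 0 0) 0 p = 1/(p 1)^3 ∧
    pderiv' (fun q => gbar q 0 0) 1 p = -(3*(p 0))/(p 1)^4 := by
  have hD' : p 0 * p 0 * (p 1 * p 1) - 1 ≠ 0 := by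
    rw [show p 0 * p 0 * (p 1 * p 1) - 1 = (p 0)^2*(p 1)^2 - 1 by ring]; exact hD
  have hne : p 1 * (p 0 * p 0 * (p 1 * p 1) - 1) ≠ 0 := mul_ne_zero hy hD'
  have e : (fun q => gbar q 0 0)
      = (fun q : Fin 2 → ℝ => (q 1 * (q 0 * q 0 * (q 1 * q 1) - 1))⁻¹ *
          (q 0 * (q 0 * q 0 * (q 1 * q 1) - 1) * (q 1 * q 1)⁻¹)) := by
    funext q
    simp only [gbar, V, g, Matrix.cons_val', Matrix.cons_val_zero, Matrix.empty_val',
      Matrix.cons_val_fin_one, Matrix.cons_val_one, Matrix.head_cons, Matrix.head_fin_const]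
    rw [one_div]; ring
  have h : HasFDerivAt
      (fun q : Fin 2 → ℝ => (q 1 * (q 0 * q 0 * (q 1 * q 1) - 1))⁻¹ *
          (q 0 * (q 0 * q 0 * (q 1 * q 1) - 1) * (q 1 * q 1)⁻¹)) _ p :=
    ((hasDerivAt_inv hne).comp_hasFDerivAt p ((hasF_proj 1).mul
      ((((hasF_proj 0).mul (hasF_proj 0)).mul ((hasF_proj 1).mul (hasF_proj 1))).sub_const 1))).mul
    (((hasF_proj 0).mul ((((hasF_proj 0).mul (hasF_proj 0)).mul
      ((hasF_proj 1).mul (hasF_proj 1))).sub_const 1)).mul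
      ((hasDerivAt_inv (mul_ne_zero hy hy)).comp_hasFDerivAt p ((hasF_proj 1).mul (hasF_proj 1))))
  rw [e]
  constructor <;> rw [pd_eq h] <;> simp [Pi.single_apply] <;> field_simp <;> ring

lemma pd_gbar11 (hy : p 1 ≠ 0) (hD : (p 0)^2*(p 1)^2 - 1 ≠ 0) :
    pderiv' (fun q => gbar q 1 1) 0 p = 0 ∧
    pderiv' (fun q => gbar q 1 1) 1 p = -2/(p 1)^3 := by
  have hD' : p 0 * p 0 * (p 1 * p 1) - 1 ≠ 0 := by
    rw [show p 0 * p 0 * (p 1 * p 1) - 1 = (p 0)^2*(p 1)^2 - 1 by ring]; exact hD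
  have hne : p 1 * (p 0 * p 0 * (p 1 * p 1) - 1) ≠ 0 := mul_ne_zero hy hD'
  have e : (fun q => gbar q 1 1)
      = (fun q : Fin 2 → ℝ => (q 1 * (q 0 * q 0 * (q 1 * q 1) - 1))⁻¹ *
          ((q 0 * q 0 * (q 1 * q 1) - 1) * (q 1)⁻¹)) := by
    funext q
    simp only [gbar, V, g, Matrix.cons_val', Matrix.cons_val_zero, Matrix.empty_val',
      Matrix.cons_val_fin_one, Matrix.cons_val_one, Matrix.head_cons, Matrix.head_fin_const]
    rw [one_div]; ring
  have h : HasFDerivAt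
      (fun q : Fin 2 → ℝ => (q 1 * (q 0 * q 0 * (q 1 * q 1) - 1))⁻¹ *
          ((q 0 * q 0 * (q 1 * q 1) - 1) * (q 1)⁻¹)) _ p :=
    ((hasDerivAt_inv hne).comp_hasFDerivAt p ((hasF_proj 1).mul
      ((((hasF_proj 0).mul (hasF_proj 0)).mul ((hasF_proj 1).mul (hasF_proj 1))).sub_const 1))).mul
    (((((hasF_proj 0).mul (hasF_proj 0)).mul
      ((hasF_proj 1).mul (hasF_proj 1))).sub_const 1).mul
      ((hasDerivAt_inv hy).comp_hasFDerivAt p (hasF_proj 1)))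
  rw [e]
  constructor <;> rw [pd_eq h] <;> simp [Pi.single_apply] <;> field_simp <;> ring

lemma pd_gbar01 (σ : Fin 2) : pderiv' (fun q => gbar q 0 1) σ p = 0 := by
  have e : (fun q => gbar q 0 1) = (fun _ : Fin 2 → ℝ => (0:ℝ)) := by
    funext q; simp [gbar, g]
  rw [e]; exact pd_zero σ

lemma pd_gbar10 (σ : Fin 2) : pderiv' (fun q => gbar q 1 0) σ p = 0 := by
  have e : (fun q => gbar q 1 0) = (fun _ : Fin 2 → ℝ => (0:ℝ)) := by
    funext q; simp [gbar, g]
  rw [e]; exact pd_zero σ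

lemma pd_xi1_0 (hx : 0 < p 0) :
    pderiv' (fun q => ξ₁ q 0) 0 p = -(1/(2*(p 0)*Real.sqrt (p 0))) ∧
    pderiv' (fun q => ξ₁ q 0) 1 p = 0 := by
  have hsne : Real.sqrt (p 0) ≠ 0 := ne_of_gt (Real.sqrt_pos.mpr hx)
  have e : (fun q => ξ₁ q 0) = (fun q : Fin 2 → ℝ => (Real.sqrt (q 0))⁻¹) := by
    funext q; simp [ξ₁]
  have h : HasFDerivAt (fun q : Fin 2 → ℝ => (Real.sqrt (q 0))⁻¹) _ p :=
    HasDerivAt.comp_hasFDerivAt (h₂ := fun x => (Real.sqrt x)⁻¹) p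
      ((Real.hasDerivAt_sqrt hx.ne').inv hsne) (hasF_proj 0)
  have hs2 : Real.sqrt (p 0) ^ 2 = p 0 := Real.sq_sqrt hx.le
  rw [e]
  refine ⟨?_, ?_⟩
  · rw [pd_eq h]; simp [Pi.single_apply]; rw [← hs2]; field_simp; rw [Real.sqrt_sq (Real.sqrt_nonneg _)]
  · rw [pd_eq h]; simp [Pi.single_apply]

lemma pd_xi1_1 (σ : Fin 2) : pderiv' (fun q => ξ₁ q 1) σ p = 0 := by
  have e : (fun q => ξ₁ q 1) = (fun _ : Fin 2 → ℝ => (0:ℝ)) := by funext q; simp [ξ₁]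
  rw [e]; exact pd_zero σ

lemma pd_xi2_0 (σ : Fin 2) :
    pderiv' (fun q => ξ₂ q 0) σ p = if σ = 0 then 1 else 0 := by
  have e : (fun q => ξ₂ q 0) = (fun q : Fin 2 → ℝ => q 0) := by funext q; simp [ξ₂]
  rw [e, pd_eq (hasF_proj 0)]; fin_cases σ <;> simp [Pi.single_apply]

lemma pd_xi2_1 (σ : Fin 2) :
    pderiv' (fun q => ξ₂ q 1) σ p = if σ = 1 then 1 else 0 := by
  have e : (fun q => ξ₂ q 1) = (fun q : Fin 2 → ℝ => q 1) := by funext q; simp [ξ₂]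
  rw [e, pd_eq (hasF_proj 1)]; fin_cases σ <;> simp [Pi.single_apply]





end

/-- On `U`, the scaled metric `ḡ = V g` has components `ḡ_xx = x/y³`,
`ḡ_yy = 1/y²`; the vector fields `ξ₁ = x^{−1/2}∂_x` and `ξ₂ = x∂_x + y∂_y` are Killing
vectors of `ḡ`; equivalently, each `ξᵢ` satisfies `L_{ξᵢ} g = ωᵢ g` and
`ξᵢ^σ ∂_σ V + ωᵢ V = 0` for a suitable smooth `ωᵢ`, so each generates a variational
(Noether) symmetry of the constrained Lagrangian with kinetic metric `g` and potential `V`. -/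
theorem two_dim_conformal_killing_example :
    -- the scaled metric has the stated components
    (∀ p ∈ U, gbar p = ![![p 0 / (p 1)^3, 0], ![0, 1 / (p 1)^2]])
    -- `ξ₁`, `ξ₂` are Killing vectors of `ḡ`
    ∧ (∀ p ∈ U, ∀ α μ, lieD ξ₁ gbar p α μ = 0)
    ∧ (∀ p ∈ U, ∀ α μ, lieD ξ₂ gbar p α μ = 0)
    -- equivalently each satisfies the variational symmetry condition for `(g, V)`
    ∧ (∃ ω₁ : (Fin 2 → ℝ) → ℝ, ContDiffOn ℝ (⊤ : ℕ∞) ω₁ U ∧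
        (∀ p ∈ U, ∀ α μ, lieD ξ₁ g p α μ = ω₁ p * g p α μ) ∧
        (∀ p ∈ U, (∑ σ, ξ₁ p σ * pderiv' V σ p) + ω₁ p * V p = 0))
    ∧ (∃ ω₂ : (Fin 2 → ℝ) → ℝ, ContDiffOn ℝ (⊤ : ℕ∞) ω₂ U ∧
        (∀ p ∈ U, ∀ α μ, lieD ξ₂ g p α μ = ω₂ p * g p α μ) ∧
        (∀ p ∈ U, (∑ σ, ξ₂ p σ * pderiv' V σ p) + ω₂ p * V p = 0)) := by

  have cd0 : ContDiff ℝ (⊤ : WithTop ℕ∞) (fun q : Fin 2 → ℝ => q 0) :=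
    (ContinuousLinearMap.proj (0 : Fin 2) : (Fin 2 → ℝ) →L[ℝ] ℝ).contDiff
  have cd1 : ContDiff ℝ (⊤ : WithTop ℕ∞) (fun q : Fin 2 → ℝ => q 1) :=
    (ContinuousLinearMap.proj (1 : Fin 2) : (Fin 2 → ℝ) →L[ℝ] ℝ).contDiff
  refine ⟨?_, ?_, ?_, ?_, ?_⟩
  · -- components of gbar
    intro p hp
    obtain ⟨hx, hy, hxy⟩ := hp
    have hD : (p 0)^2*(p 1)^2 - 1 ≠ 0 := sub_ne_zero.mpr hxy
    funext α μ
    fin_cases α <;> fin_cases μ <;>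
      simp [gbar, g, V] <;> field_simp <;> ring
  · -- ξ₁ Killing for gbar
    intro p hp
    obtain ⟨hx, hy, hxy⟩ := hp
    have hD : (p 0)^2*(p 1)^2 - 1 ≠ 0 := sub_ne_zero.mpr hxy
    have A := pd_gbar00 hy.ne' hD
    have B := pd_gbar11 hy.ne' hD
    have X := pd_xi1_0 hx
    obtain ⟨s, hs0, hsx, hsq⟩ : ∃ s : ℝ, 0 < s ∧ Real.sqrt (p 0) = s ∧ p 0 = s^2 :=
      ⟨Real.sqrt (p 0), Real.sqrt_pos.mpr hx, rfl, (Real.sq_sqrt hx.le).symm⟩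
    have hD2 : (s^2)^2 * (p 1)^2 - 1 ≠ 0 := by rw [← hsq]; exact hD
    have hD3 : s ^ 4 * p 1 ^ 2 - 1 ≠ 0 := by ring_nf at hD2 ⊢; exact hD2
    simp only [Fin.forall_fin_two]
    refine ⟨⟨?_, ?_⟩, ⟨?_, ?_⟩⟩ <;>
      · simp only [lieD, Fin.sum_univ_two, A.1, A.2, B.1, B.2, pd_gbar01, pd_gbar10,
          X.1, X.2, pd_xi1_1]
        simp [ξ₁, gbar, g, V]
        try rw [hsx]
        try rw [hsq]
        try field_simp
        try ring
  · -- ξ₂ Killing for gbar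
    intro p hp
    obtain ⟨hx, hy, hxy⟩ := hp
    have hD : (p 0)^2*(p 1)^2 - 1 ≠ 0 := sub_ne_zero.mpr hxy
    have A := pd_gbar00 hy.ne' hD
    have B := pd_gbar11 hy.ne' hD
    have hD3 : p 1 ^ 2 * p 0 ^ 2 - 1 ≠ 0 := by ring_nf at hD ⊢; exact hD
    simp only [Fin.forall_fin_two]
    refine ⟨⟨?_, ?_⟩, ⟨?_, ?_⟩⟩ <;>
      · simp only [lieD, Fin.sum_univ_two, A.1, A.2, B.1, B.2, pd_gbar01, pd_gbar10,
          pd_xi2_0, pd_xi2_1]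
        simp [ξ₂, gbar, g, V]
        try field_simp
        try ring
  · -- ξ₁ variational symmetry for (g, V)
    refine ⟨fun q => 2*Real.sqrt (q 0)*(q 1)^2/((q 0)^2*(q 1)^2 - 1), ?_, ?_, ?_⟩
    · intro p hp
      obtain ⟨hx, hy, hxy⟩ := hp
      have hD : (p 0)^2*(p 1)^2 - 1 ≠ 0 := sub_ne_zero.mpr hxy
      have hnum : ContDiffAt ℝ (⊤ : WithTop ℕ∞)
          (fun q : Fin 2 → ℝ => 2*Real.sqrt (q 0)*(q 1)^2) p :=
        ((contDiffAt_const.mul ((Real.contDiffAt_sqrt hx.ne').comp p cd0.contDiffAt)).mul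
          ((cd1.pow 2).contDiffAt))
      have hden : ContDiffAt ℝ (⊤ : WithTop ℕ∞)
          (fun q : Fin 2 → ℝ => (q 0)^2*(q 1)^2 - 1) p :=
        (((cd0.pow 2).mul (cd1.pow 2)).sub contDiff_const).contDiffAt
      exact ((hnum.div hden hD).of_le le_top).contDiffWithinAt
    · intro p hp
      obtain ⟨hx, hy, hxy⟩ := hp
      have hD : (p 0)^2*(p 1)^2 - 1 ≠ 0 := sub_ne_zero.mpr hxy
      have A := pd_g00 hy.ne'
      have B := pd_g11 hy.ne'
      have X := pd_xi1_0 hx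
      obtain ⟨s, hs0, hsx, hsq⟩ : ∃ s : ℝ, 0 < s ∧ Real.sqrt (p 0) = s ∧ p 0 = s^2 :=
        ⟨Real.sqrt (p 0), Real.sqrt_pos.mpr hx, rfl, (Real.sq_sqrt hx.le).symm⟩
      have hD2 : (s^2)^2 * (p 1)^2 - 1 ≠ 0 := by rw [← hsq]; exact hD
      have hD3 : s ^ 4 * p 1 ^ 2 - 1 ≠ 0 := by ring_nf at hD2 ⊢; exact hD2
      simp only [Fin.forall_fin_two]
      refine ⟨⟨?_, ?_⟩, ⟨?_, ?_⟩⟩ <;>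
        · simp only [lieD, Fin.sum_univ_two, A.1, A.2, B.1, B.2, pd_g01, pd_g10,
            X.1, X.2, pd_xi1_1]
          simp [ξ₁, g]
          try rw [hsx]
          try rw [hsq]
          try field_simp
          try ring
    · intro p hp
      obtain ⟨hx, hy, hxy⟩ := hp
      have hD : (p 0)^2*(p 1)^2 - 1 ≠ 0 := sub_ne_zero.mpr hxy
      have Vp := pd_V hy.ne' hD
      obtain ⟨s, hs0, hsx, hsq⟩ : ∃ s : ℝ, 0 < s ∧ Real.sqrt (p 0) = s ∧ p 0 = s^2 :=
        ⟨Real.sqrt (p 0), Real.sqrt_pos.mpr hx, rfl, (Real.sq_sqrt hx.le).symm⟩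
      have hD2 : (s^2)^2 * (p 1)^2 - 1 ≠ 0 := by rw [← hsq]; exact hD
      simp only [Fin.sum_univ_two, Vp.1, Vp.2]
      simp [ξ₁, V]
      rw [hsx, hsq]; field_simp; ring
  · -- ξ₂ variational symmetry for (g, V)
    refine ⟨fun q => (5*(q 0)^2*(q 1)^2 - 1)/((q 0)^2*(q 1)^2 - 1), ?_, ?_, ?_⟩
    · intro p hp
      obtain ⟨hx, hy, hxy⟩ := hp
      have hD : (p 0)^2*(p 1)^2 - 1 ≠ 0 := sub_ne_zero.mpr hxy
      have hnum : ContDiffAt ℝ (⊤ : WithTop ℕ∞)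
          (fun q : Fin 2 → ℝ => 5*(q 0)^2*(q 1)^2 - 1) p :=
        (((contDiff_const.mul (cd0.pow 2)).mul (cd1.pow 2)).sub contDiff_const).contDiffAt
      have hden : ContDiffAt ℝ (⊤ : WithTop ℕ∞)
          (fun q : Fin 2 → ℝ => (q 0)^2*(q 1)^2 - 1) p :=
        (((cd0.pow 2).mul (cd1.pow 2)).sub contDiff_const).contDiffAt
      exact ((hnum.div hden hD).of_le le_top).contDiffWithinAt
    · intro p hp
      obtain ⟨hx, hy, hxy⟩ := hp
      have hD : (p 0)^2*(p 1)^2 - 1 ≠ 0 := sub_ne_zero.mpr hxy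
      have A := pd_g00 hy.ne'
      have B := pd_g11 hy.ne'
      have hD3 : p 1 ^ 2 * p 0 ^ 2 - 1 ≠ 0 := by ring_nf at hD ⊢; exact hD
      simp only [Fin.forall_fin_two]
      refine ⟨⟨?_, ?_⟩, ⟨?_, ?_⟩⟩ <;>
        · simp only [lieD, Fin.sum_univ_two, A.1, A.2, B.1, B.2, pd_g01, pd_g10,
            pd_xi2_0, pd_xi2_1]
          simp [ξ₂, g]
          try field_simp
          try ring
    · intro p hp
      obtain ⟨hx, hy, hxy⟩ := hp
      have hD : (p 0)^2*(p 1)^2 - 1 ≠ 0 := sub_ne_zero.mpr hxy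
      have Vp := pd_V hy.ne' hD
      simp only [Fin.sum_univ_two, Vp.1, Vp.2]
      simp [ξ₂, V]
      field_simp
      ring

end TwoDimExample

end
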